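/- arXiv:1312.7100 — 7 statements merged into one kernel-verified Lean document; each statement's English description precedes it below -/
import Mathlib

section
/- Let 0 < a < b, M ≥ 0, and let f : [a,b] → ℝ be M-Lipschitz. Then for all x ∈ [a,b], | f(x) - (1/(ln b - ln a)) ∫_a^b f(t)/t dt | ≤ [M/(ln b - ln a)] { x·ln(x²/(ab)) + (a + b - 2x) }. -/
/-!
Since `f x - W⁻¹ ∫ f w = W⁻¹ ∫ (f x - f t) w(t) dt` for any weight `w` of total mass `W`, the
Lipschitz bound `|f x - f t| ≤ M |x - t|` gives `M W⁻¹ ∫ |x - t| w(t) dt`. For the weight `1/t` on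
`[a, b]` we have `W = ln b - ln a`, and splitting at `t = x` computes
`∫ |x - t| / t dt = x ln (x² / (ab)) + a + b - 2x`.
-/

open Set Real intervalIntegral
open scoped NNReal

section WeightedAverage

variable {f w : ℝ → ℝ} {a b x : ℝ} {K : ℝ≥0}

theorem abs_integral_sub_mul_le (hf : LipschitzOnWith K f (Icc a b))
    (hw : ContinuousOn w (Icc a b)) (hw0 : ∀ t ∈ Icc a b, 0 ≤ w t) (hx : x ∈ Icc a b) :
    |∫ t in a..b, (f x - f t) * w t| ≤ K * ∫ t in a..b, |x - t| * w t := by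
  have hab : a ≤ b := hx.1.trans hx.2
  rw [← integral_const_mul]
  refine (abs_integral_le_integral_abs hab).trans (integral_mono_on hab ?_ ?_ fun t ht => ?_)
  · exact ((continuousOn_const.sub hf.continuousOn).mul hw).intervalIntegrable_of_Icc hab |>.abs
  · exact (continuousOn_const.mul
      (((continuous_const.sub continuous_id).abs.continuousOn).mul hw)).intervalIntegrable_of_Icc hab
  · have hLip : |f x - f t| ≤ K * |x - t| := by
      simpa only [Real.dist_eq] using hf.dist_le_mul x hx t ht
    rw [abs_mul, abs_of_nonneg (hw0 t ht), ← mul_assoc]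
    exact mul_le_mul_of_nonneg_right hLip (hw0 t ht)

theorem abs_sub_weighted_average_le (hf : LipschitzOnWith K f (Icc a b))
    (hw : ContinuousOn w (Icc a b)) (hw0 : ∀ t ∈ Icc a b, 0 ≤ w t)
    (hW : 0 < ∫ t in a..b, w t) (hx : x ∈ Icc a b) :
    |f x - (∫ t in a..b, w t)⁻¹ * ∫ t in a..b, f t * w t|
      ≤ K * (∫ t in a..b, w t)⁻¹ * ∫ t in a..b, |x - t| * w t := by
  have hab : a ≤ b := hx.1.trans hx.2
  have hdev : ∫ t in a..b, (f x - f t) * w t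
      = f x * (∫ t in a..b, w t) - ∫ t in a..b, f t * w t := by
    simp only [sub_mul]
    rw [integral_sub, integral_const_mul]
    · exact (continuousOn_const.mul hw).intervalIntegrable_of_Icc hab
    · exact (hf.continuousOn.mul hw).intervalIntegrable_of_Icc hab
  have hmean : f x - (∫ t in a..b, w t)⁻¹ * ∫ t in a..b, f t * w t
      = (∫ t in a..b, w t)⁻¹ * ∫ t in a..b, (f x - f t) * w t := by
    rw [hdev]
    field_simp
  rw [hmean, abs_mul, abs_of_pos (inv_pos.2 hW), mul_comm (K : ℝ), mul_assoc]
  exact mul_le_mul_of_nonneg_left (abs_integral_sub_mul_le hf hw hw0 hx) (inv_pos.2 hW).le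

end WeightedAverage

theorem integral_sub_mul_inv {c d : ℝ} (x : ℝ) (h : (0 : ℝ) ∉ uIcc c d) :
    ∫ t in c..d, (x - t) * t⁻¹ = x * log (d / c) - (d - c) := by
  have hne : ∀ t ∈ uIcc c d, t ≠ 0 := fun t ht h0 => h (h0 ▸ ht)
  have hcongr : EqOn (fun t => (x - t) * t⁻¹) (fun t => x * t⁻¹ - 1) (uIcc c d) := by
    intro t ht
    simp only [sub_mul, mul_inv_cancel₀ (hne t ht)]
  rw [integral_congr hcongr, integral_sub, integral_const_mul, integral_inv h, integral_one]
  · exact (intervalIntegrable_inv hne continuousOn_id).const_mul x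
  · exact intervalIntegrable_const

theorem integral_abs_sub_mul_inv {a b x : ℝ} (ha : 0 < a) (hx : x ∈ Icc a b) :
    ∫ t in a..b, |x - t| * t⁻¹ = x * log (x ^ 2 / (a * b)) + (a + b - 2 * x) := by
  obtain ⟨hax, hxb⟩ := hx
  have hx0 : 0 < x := ha.trans_le hax
  have hb0 : 0 < b := hx0.trans_le hxb
  have h0 : ∀ {c d : ℝ}, 0 < c → c ≤ d → (0 : ℝ) ∉ uIcc c d := fun hc hcd h0 =>
    (hc.trans_le (uIcc_of_le hcd ▸ h0).1).false
  have hleft : ∫ t in a..x, |x - t| * t⁻¹ = ∫ t in a..x, (x - t) * t⁻¹ :=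
    integral_congr fun t ht => by
      rw [uIcc_of_le hax] at ht
      simp only [abs_of_nonneg (sub_nonneg.2 ht.2)]
  have hright : ∫ t in x..b, |x - t| * t⁻¹ = -∫ t in x..b, (x - t) * t⁻¹ := by
    rw [← integral_neg]
    refine integral_congr fun t ht => ?_
    rw [uIcc_of_le hxb] at ht
    simp only [abs_of_nonpos (sub_nonpos.2 ht.1), neg_mul]
  have hint : ∀ {c d : ℝ}, 0 < c → c ≤ d →
      IntervalIntegrable (fun t => |x - t| * t⁻¹) MeasureTheory.volume c d :=
    fun hc hcd => ContinuousOn.intervalIntegrable_of_Icc hcd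
      ((continuous_const.sub continuous_id).abs.continuousOn.mul
        (continuousOn_inv₀.mono fun t ht => (hc.trans_le ht.1).ne'))
  rw [← integral_add_adjacent_intervals (hint ha hax) (hint hx0 hxb), hleft, hright,
    integral_sub_mul_inv x (h0 ha hax), integral_sub_mul_inv x (h0 hx0 hxb),
    log_div hx0.ne' ha.ne', log_div hb0.ne' hx0.ne', log_div (by positivity) (by positivity),
    log_pow, log_mul ha.ne' hb0.ne']
  push_cast
  ring

/-- Corollary (λ = 0, α = 1 case) of Theorem 2.1: Ostrowski-type inequality for
`M`-Lipschitzian functions. -/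
theorem stmt_2 (a b M : ℝ) (ha : 0 < a) (hab : a < b) (hM : 0 ≤ M)
    (f : ℝ → ℝ)
    (hf : ∀ x ∈ Set.Icc a b, ∀ y ∈ Set.Icc a b, |f x - f y| ≤ M * |x - y|)
    (x : ℝ) (hx : x ∈ Set.Icc a b) :
    |f x - (1 / (Real.log b - Real.log a)) * ∫ t in a..b, f t / t|
    ≤ M / (Real.log b - Real.log a) *
        (x * Real.log (x ^ 2 / (a * b)) + (a + b - 2 * x)) := by
  have hlog : ∫ t in a..b, t⁻¹ = log b - log a := by
    rw [integral_inv_of_pos ha (ha.trans hab), log_div (ha.trans hab).ne' ha.ne']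
  have hLip : LipschitzOnWith M.toNNReal f (Icc a b) := .of_dist_le_mul fun s hs t ht => by
    simpa only [Real.dist_eq, Real.coe_toNNReal M hM] using hf s hs t ht
  have hw : ContinuousOn (fun t : ℝ => t⁻¹) (Icc a b) :=
    continuousOn_inv₀.mono fun t ht => (ha.trans_le ht.1).ne'
  have hw0 : ∀ t ∈ Icc a b, 0 ≤ t⁻¹ := fun t ht => inv_nonneg.2 (ha.le.trans ht.1)
  have hW : 0 < ∫ t in a..b, t⁻¹ := hlog ▸ sub_pos.2 (log_lt_log ha hab)
  have key := abs_sub_weighted_average_le hLip hw hw0 hW hx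
  rw [hlog, integral_abs_sub_mul_inv ha hx, Real.coe_toNNReal M hM] at key
  simpa only [div_eq_mul_inv, one_mul] using key
end

section
/- Let 0 < a < b, M ≥ 0, and let f : [a,b] → ℝ be M-Lipschitz. Then | f(√(ab)) - (1/(ln b - ln a)) ∫_a^b f(t)/t dt | ≤ [M/(ln b - ln a)] (a + b - 2√(ab)). -/
/-!
With `g = √(ab)` and `L = log b - log a`, the quantity `f g - (1/L) ∫ₐᵇ f t / t dt`
equals `(1/L) ∫ₐᵇ (f g - f t) / t dt`, which the Lipschitz bound controls by
`(M/L) ∫ₐᵇ |g - t| / t dt`.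
Splitting this integral at `g` gives `g (2 log g - log a - log b) + a + b - 2g`, and the
logarithmic term vanishes exactly because `g` is the geometric mean of `a` and `b`.
-/

open Real Set intervalIntegral

lemma intervalIntegrable_div_id_of_pos {f : ℝ → ℝ} {a b : ℝ} (ha : 0 < a) (hab : a ≤ b)
    (hf : ContinuousOn f (Icc a b)) :
    IntervalIntegrable (fun t => f t / t) MeasureTheory.volume a b :=
  (hf.div continuousOn_id fun _ ht => (ha.trans_le ht.1).ne').intervalIntegrable_of_Icc hab

lemma integral_const_div_of_pos {a b : ℝ} (c : ℝ) (ha : 0 < a) (hb : 0 < b) :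
    ∫ t in a..b, c / t = c * (log b - log a) := by
  simp_rw [div_eq_mul_inv c, integral_const_mul, integral_inv_of_pos ha hb,
    log_div hb.ne' ha.ne']

lemma integral_div_sub_one {a b : ℝ} (c : ℝ) (ha : 0 < a) (hab : a ≤ b) :
    ∫ t in a..b, (c / t - 1) = c * (log b - log a) - (b - a) := by
  rw [integral_sub (intervalIntegrable_div_id_of_pos ha hab continuousOn_const)
    intervalIntegrable_const, integral_const_div_of_pos c ha (ha.trans_le hab), integral_const,
    smul_eq_mul, mul_one]

lemma integral_abs_sub_div {a b c : ℝ} (ha : 0 < a) (hac : a ≤ c) (hcb : c ≤ b) :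
    ∫ t in a..b, |c - t| / t = c * (2 * log c - log a - log b) + (a + b - 2 * c) := by
  have hc : 0 < c := ha.trans_le hac
  have hcont : ContinuousOn (fun t => |c - t|) (Icc a b) := by fun_prop
  have hint (x y) (hx : a ≤ x) (hy : y ≤ b) (hxy : x ≤ y) :
      IntervalIntegrable (fun t => |c - t| / t) MeasureTheory.volume x y :=
    intervalIntegrable_div_id_of_pos (ha.trans_le hx) hxy (hcont.mono (Icc_subset_Icc hx hy))
  have left : ∫ t in a..c, |c - t| / t = ∫ t in a..c, (c / t - 1) := by
    refine integral_congr fun t ht => ?_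
    rw [uIcc_of_le hac] at ht
    rw [abs_of_nonneg (sub_nonneg.2 ht.2), sub_div, div_self (ha.trans_le ht.1).ne']
  have right : ∫ t in c..b, |c - t| / t = ∫ t in c..b, -(c / t - 1) := by
    refine integral_congr fun t ht => ?_
    rw [uIcc_of_le hcb] at ht
    rw [abs_of_nonpos (sub_nonpos.2 ht.1), neg_div, sub_div, div_self (hc.trans_le ht.1).ne']
  rw [← integral_add_adjacent_intervals (hint a c le_rfl hcb hac) (hint c b hac le_rfl hcb),
    left, right, integral_neg, integral_div_sub_one c ha hac,
    integral_div_sub_one c hc hcb]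
  ring

lemma sqrt_mul_mem_Icc {a b : ℝ} (ha : 0 ≤ a) (hab : a ≤ b) : √(a * b) ∈ Icc a b := by
  have hb : 0 ≤ b := ha.trans hab
  constructor
  · simpa [sqrt_mul_self ha] using sqrt_le_sqrt (mul_le_mul_of_nonneg_left hab ha)
  · simpa [sqrt_mul_self hb] using sqrt_le_sqrt (mul_le_mul_of_nonneg_right hab hb)

lemma integral_abs_sqrt_mul_sub_div {a b : ℝ} (ha : 0 < a) (hab : a ≤ b) :
    ∫ t in a..b, |√(a * b) - t| / t = a + b - 2 * √(a * b) := by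
  have hb : 0 < b := ha.trans_le hab
  obtain ⟨hag, hgb⟩ := sqrt_mul_mem_Icc ha.le hab
  have hlog : 2 * log √(a * b) = log a + log b := by
    rw [log_sqrt (by positivity), log_mul ha.ne' hb.ne']
    ring
  rw [integral_abs_sub_div ha hag hgb, hlog]
  ring

lemma abs_mul_log_sub_integral_div_le {f : ℝ → ℝ} {a b c M : ℝ} (ha : 0 < a) (hab : a ≤ b)
    (hfc : ContinuousOn f (Icc a b)) (hf : ∀ t ∈ Icc a b, |f c - f t| ≤ M * |c - t|) :
    |f c * (log b - log a) - ∫ t in a..b, f t / t| ≤ M * ∫ t in a..b, |c - t| / t := by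
  have hb : 0 < b := ha.trans_le hab
  rw [← integral_const_div_of_pos _ ha hb,
    ← integral_sub (intervalIntegrable_div_id_of_pos ha hab continuousOn_const)
      (intervalIntegrable_div_id_of_pos ha hab hfc),
    ← integral_const_mul M fun t => |c - t| / t, ← Real.norm_eq_abs]
  refine norm_integral_le_of_norm_le hab (Filter.Eventually.of_forall fun t ht => ?_)
    ((intervalIntegrable_div_id_of_pos (f := fun t => |c - t|) ha hab
      (by fun_prop)).const_mul M)
  have ht : t ∈ Icc a b := Ioc_subset_Icc_self ht
  rw [Real.norm_eq_abs, ← sub_div, abs_div, abs_of_pos (ha.trans_le ht.1), ← mul_div_assoc]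
  exact div_le_div_of_nonneg_right (hf t ht) (ha.trans_le ht.1).le

theorem stmt_4_general (a b M : ℝ) (ha : 0 < a) (hab : a < b)
    (f : ℝ → ℝ)
    (hf : ∀ x ∈ Set.Icc a b, ∀ y ∈ Set.Icc a b, |f x - f y| ≤ M * |x - y|) :
    |f (Real.sqrt (a * b)) - (1 / (Real.log b - Real.log a)) * ∫ t in a..b, f t / t|
    ≤ M / (Real.log b - Real.log a) * (a + b - 2 * Real.sqrt (a * b)) := by
  have hL : 0 < log b - log a := sub_pos.2 (log_lt_log ha hab)
  have hfc : ContinuousOn f (Icc a b) := (LipschitzOnWith.of_dist_le' hf).continuousOn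
  have hdev := abs_mul_log_sub_integral_div_le ha hab.le hfc (hf _ (sqrt_mul_mem_Icc ha.le hab.le))
  rw [integral_abs_sqrt_mul_sub_div ha hab.le] at hdev
  have hmean : f √(a * b) - 1 / (log b - log a) * ∫ t in a..b, f t / t =
      (f √(a * b) * (log b - log a) - ∫ t in a..b, f t / t) / (log b - log a) := by
    field_simp
  rw [hmean, abs_div, abs_of_pos hL, div_mul_eq_mul_div]
  exact div_le_div_of_nonneg_right hdev hL.le

/-- Inequality (3.1): midpoint (geometric mean) inequality for `M`-Lipschitzian
functions. -/
theorem stmt_4 (a b M : ℝ) (ha : 0 < a) (hab : a < b) (hM : 0 ≤ M)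
    (f : ℝ → ℝ)
    (hf : ∀ x ∈ Set.Icc a b, ∀ y ∈ Set.Icc a b, |f x - f y| ≤ M * |x - y|) :
    |f (Real.sqrt (a * b)) - (1 / (Real.log b - Real.log a)) * ∫ t in a..b, f t / t|
    ≤ M / (Real.log b - Real.log a) * (a + b - 2 * Real.sqrt (a * b)) :=
  stmt_4_general a b M ha hab f hf
end

section
/- Let 0 < a < b, M ≥ 0, and let f : [a,b] → ℝ be M-Lipschitz. Then | (f(a) + f(b))/2 - (1/(ln b - ln a)) ∫_a^b f(t)/t dt | ≤ [M/(ln b - ln a)] { [(b-a)/2] ln(b/a) - (a + b - 2√(ab)) }. -/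
/-!
Split `[a, b]` at the geometric mean `c = √(ab)`, which halves `∫ dt / t = log b - log a`, so that
`(f a + f b) / 2 * (log b - log a) = ∫_a^c f a / t + ∫_c^b f b / t`. Comparing `f t` with `f a` on
`[a, c]` and with `f b` on `[c, b]` by the Lipschitz bound leaves the explicit integrals
`∫ |p - t| / t` for the endpoints `p`.
-/

open intervalIntegral Real Set

section IntegralsAgainstInv

variable {f : ℝ → ℝ} {u v : ℝ}

theorem intervalIntegrable_div_self_of_continuousOn (hu : 0 < u) (huv : u ≤ v)
    (hf : ContinuousOn f (Icc u v)) :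
    IntervalIntegrable (fun t => f t / t) MeasureTheory.volume u v :=
  (hf.div continuousOn_id fun _ ht => (hu.trans_le ht.1).ne').intervalIntegrable_of_Icc huv

theorem integral_const_sub_div_self (hu : 0 < u) (huv : u ≤ v) (hf : ContinuousOn f (Icc u v))
    (y : ℝ) :
    ∫ t in u..v, (y - f t) / t = y * log (v / u) - ∫ t in u..v, f t / t := by
  have hinv : IntervalIntegrable (fun t : ℝ => y / t) MeasureTheory.volume u v :=
    intervalIntegrable_div_self_of_continuousOn hu huv continuousOn_const
  simp_rw [sub_div]
  rw [integral_sub hinv (intervalIntegrable_div_self_of_continuousOn hu huv hf)]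
  simp_rw [div_eq_mul_inv y]
  rw [integral_const_mul, integral_inv_of_pos hu (hu.trans_le huv)]

theorem integral_const_sub_id_div_self (hu : 0 < u) (huv : u ≤ v) (y : ℝ) :
    ∫ t in u..v, (y - t) / t = y * log (v / u) - (v - u) := by
  rw [integral_const_sub_div_self (f := fun t => t) hu huv continuousOn_id y,
    integral_congr (g := fun _ => (1 : ℝ)) fun t ht => div_self ?_, integral_one]
  rw [uIcc_of_le huv] at ht
  exact (hu.trans_le ht.1).ne'

theorem integral_abs_left_sub_div_self (hu : 0 < u) (huv : u ≤ v) :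
    ∫ t in u..v, |u - t| / t = (v - u) - u * log (v / u) := by
  have hneg : EqOn (fun t => |u - t| / t) (fun t => -((u - t) / t)) (uIcc u v) := by
    intro t ht
    rw [uIcc_of_le huv] at ht
    simp only [abs_of_nonpos (sub_nonpos.2 ht.1), neg_div]
  rw [integral_congr hneg, integral_neg, integral_const_sub_id_div_self hu huv]
  ring

theorem integral_abs_right_sub_div_self (hu : 0 < u) (huv : u ≤ v) :
    ∫ t in u..v, |v - t| / t = v * log (v / u) - (v - u) := by
  have habs : EqOn (fun t => |v - t| / t) (fun t => (v - t) / t) (uIcc u v) := by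
    intro t ht
    rw [uIcc_of_le huv] at ht
    simp only [abs_of_nonneg (sub_nonneg.2 ht.2)]
  rw [integral_congr habs, integral_const_sub_id_div_self hu huv]

theorem abs_integral_sub_div_self_le_of_lipschitzOnWith {K : NNReal} {p : ℝ} (hu : 0 < u)
    (huv : u ≤ v) (hp : p ∈ Icc u v) (hf : LipschitzOnWith K f (Icc u v)) :
    |∫ t in u..v, (f p - f t) / t| ≤ K * ∫ t in u..v, |p - t| / t := by
  rw [← integral_const_mul, ← Real.norm_eq_abs]
  refine norm_integral_le_of_norm_le huv (Filter.Eventually.of_forall fun t ht => ?_)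
    ((intervalIntegrable_div_self_of_continuousOn hu huv (f := fun t => |p - t|)
      (by fun_prop)).const_mul K)
  have ht0 : 0 < t := hu.trans ht.1
  rw [Real.norm_eq_abs, abs_div, abs_of_pos ht0, mul_div_assoc']
  gcongr
  simpa [Real.dist_eq] using hf.dist_le_mul p hp t (Ioc_subset_Icc_self ht)

end IntegralsAgainstInv

theorem log_sqrt_mul_div_left {a b : ℝ} (ha : 0 < a) (hb : 0 < b) :
    log (√(a * b) / a) = (log b - log a) / 2 := by
  rw [log_div (by positivity) ha.ne', log_sqrt (by positivity), log_mul ha.ne' hb.ne']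
  ring

theorem log_div_sqrt_mul_right {a b : ℝ} (ha : 0 < a) (hb : 0 < b) :
    log (b / √(a * b)) = (log b - log a) / 2 := by
  rw [log_div hb.ne' (by positivity), log_sqrt (by positivity), log_mul ha.ne' hb.ne']
  ring

theorem abs_endpoint_weighted_sub_integral_div_self_le {f : ℝ → ℝ} {K : NNReal} {a b c : ℝ}
    (ha : 0 < a) (hac : a ≤ c) (hcb : c ≤ b) (hf : LipschitzOnWith K f (Icc a b)) :
    |f a * log (c / a) + f b * log (b / c) - ∫ t in a..b, f t / t|
      ≤ K * (b * log (b / c) - a * log (c / a) - (a + b - 2 * c)) := by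
  have hc : 0 < c := ha.trans_le hac
  have hfl : LipschitzOnWith K f (Icc a c) := hf.mono (Icc_subset_Icc_right hcb)
  have hfr : LipschitzOnWith K f (Icc c b) := hf.mono (Icc_subset_Icc_left hac)
  have hleft := abs_integral_sub_div_self_le_of_lipschitzOnWith ha hac ⟨le_rfl, hac⟩ hfl
  have hright := abs_integral_sub_div_self_le_of_lipschitzOnWith hc hcb ⟨hcb, le_rfl⟩ hfr
  rw [integral_abs_left_sub_div_self ha hac] at hleft
  rw [integral_abs_right_sub_div_self hc hcb] at hright
  have hsplit : f a * log (c / a) + f b * log (b / c) - ∫ t in a..b, f t / t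
      = (∫ t in a..c, (f a - f t) / t) + ∫ t in c..b, (f b - f t) / t := by
    rw [integral_const_sub_div_self ha hac hfl.continuousOn,
      integral_const_sub_div_self hc hcb hfr.continuousOn,
      ← integral_add_adjacent_intervals
        (intervalIntegrable_div_self_of_continuousOn ha hac hfl.continuousOn)
        (intervalIntegrable_div_self_of_continuousOn hc hcb hfr.continuousOn)]
    ring
  calc _ ≤ |∫ t in a..c, (f a - f t) / t| + |∫ t in c..b, (f b - f t) / t| :=
        hsplit ▸ abs_add_le _ _
    _ ≤ K * ((c - a) - a * log (c / a)) + K * (b * log (b / c) - (b - c)) :=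
        add_le_add hleft hright
    _ = _ := by ring

/-- Inequality (3.2): trapezoid-type inequality for `M`-Lipschitzian functions. -/
theorem stmt_6 (a b M : ℝ) (ha : 0 < a) (hab : a < b) (hM : 0 ≤ M)
    (f : ℝ → ℝ)
    (hf : ∀ x ∈ Set.Icc a b, ∀ y ∈ Set.Icc a b, |f x - f y| ≤ M * |x - y|) :
    |(f a + f b) / 2 - (1 / (Real.log b - Real.log a)) * ∫ t in a..b, f t / t|
    ≤ M / (Real.log b - Real.log a) *
        ((b - a) / 2 * Real.log (b / a) - (a + b - 2 * Real.sqrt (a * b))) := by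
  have hb : 0 < b := ha.trans hab
  set L := log b - log a
  have hL : 0 < L := sub_pos.2 (log_lt_log ha hab)
  have hac : a ≤ √(a * b) := (le_sqrt' ha).2 (by nlinarith)
  have hcb : √(a * b) ≤ b := (sqrt_le_left hb.le).2 (by nlinarith)
  have hlip : LipschitzOnWith M.toNNReal f (Icc a b) := LipschitzOnWith.of_dist_le' hf
  have key := abs_endpoint_weighted_sub_integral_div_self_le ha hac hcb hlip
  rw [coe_toNNReal M hM, log_sqrt_mul_div_left ha hb, log_div_sqrt_mul_right ha hb] at key
  calc _ = |(f a * (L / 2) + f b * (L / 2) - ∫ t in a..b, f t / t) / L| := by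
        congr 1
        field_simp
    _ = |f a * (L / 2) + f b * (L / 2) - ∫ t in a..b, f t / t| / L := by
        rw [abs_div, abs_of_pos hL]
    _ ≤ M * (b * (L / 2) - a * (L / 2) - (a + b - 2 * √(a * b))) / L := by gcongr
    _ = _ := by
        rw [log_div hb.ne' ha.ne']
        field_simp
        ring
end

section
/- Let 0 < a < b, M ≥ 0, and let f : [a,b] → ℝ be M-Lipschitz. Then | (1/2)[ (f(a) + f(b))/2 + f(√(ab)) ] - (1/(ln b - ln a)) ∫_a^b f(t)/t dt | ≤ M(b-a)/4. -/
/-!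
On each half of `[a, b]` split at the geometric mean `g = √(ab)`, the trapezoid value
`(f u + f v) / 2` differs from `f t` by at most `M (v - u) / 2`; integrating against the weight
`1 / t` turns this into a weighted trapezoid estimate. The point of choosing `g` is that both
halves carry the same weight `∫ dt / t = (log b - log a) / 2`, so the two estimates average
to the claimed bound.
-/

open Set intervalIntegral

variable {f : ℝ → ℝ} {K : NNReal} {u v : ℝ}

theorem ContinuousOn.intervalIntegrable_div_id (hf : ContinuousOn f (Icc u v)) (hu : 0 < u)
    (huv : u ≤ v) : IntervalIntegrable (fun t => f t / t) MeasureTheory.volume u v := by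
  refine ContinuousOn.intervalIntegrable ?_
  rw [uIcc_of_le huv]
  exact hf.div continuousOn_id fun t ht => (hu.trans_le ht.1).ne'

namespace LipschitzOnWith

theorem abs_trapezoid_sub_le (hf : LipschitzOnWith K f (Icc u v)) {t : ℝ} (ht : t ∈ Icc u v) :
    |(f u + f v) / 2 - f t| ≤ K * (v - u) / 2 := by
  have huv : u ≤ v := ht.1.trans ht.2
  have hu := hf.dist_le_mul u (left_mem_Icc.2 huv) t ht
  have hv := hf.dist_le_mul v (right_mem_Icc.2 huv) t ht
  rw [Real.dist_eq, Real.dist_eq, abs_sub_comm u, abs_of_nonneg (sub_nonneg.2 ht.1)] at hu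
  rw [Real.dist_eq, Real.dist_eq, abs_of_nonneg (sub_nonneg.2 ht.2)] at hv
  calc |(f u + f v) / 2 - f t| = |(f u - f t) + (f v - f t)| / 2 := by
        rw [← abs_two, ← abs_div, abs_two]; ring_nf
    _ ≤ (|f u - f t| + |f v - f t|) / 2 := by gcongr; exact abs_add_le _ _
    _ ≤ K * (v - u) / 2 := by linarith

theorem abs_trapezoid_log_sub_integral_div_le (hf : LipschitzOnWith K f (Icc u v)) (hu : 0 < u)
    (huv : u ≤ v) :
    |(f u + f v) / 2 * (Real.log v - Real.log u) - ∫ t in u..v, f t / t|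
      ≤ K * (v - u) / 2 * (Real.log v - Real.log u) := by
  have hv : 0 < v := hu.trans_le huv
  have hlog : ∀ c : ℝ, ∫ t in u..v, c / t = c * (Real.log v - Real.log u) := by
    intro c
    simp_rw [div_eq_mul_one_div c, integral_const_mul, integral_one_div_of_pos hu hv,
      Real.log_div hv.ne' hu.ne']
  have hinv : IntervalIntegrable (fun t : ℝ => (f u + f v) / 2 / t) MeasureTheory.volume u v :=
    continuousOn_const.intervalIntegrable_div_id hu huv
  rw [← hlog, ← integral_sub hinv (hf.continuousOn.intervalIntegrable_div_id hu huv), ← hlog,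
    ← Real.norm_eq_abs]
  refine norm_integral_le_of_norm_le huv (MeasureTheory.ae_of_all _ fun t ht => ?_) ?_
  · have ht0 : 0 < t := hu.trans ht.1
    rw [Real.norm_eq_abs, ← sub_div, abs_div, abs_of_pos ht0]
    exact div_le_div_of_nonneg_right (hf.abs_trapezoid_sub_le (Ioc_subset_Icc_self ht)) ht0.le
  · exact continuousOn_const.intervalIntegrable_div_id hu huv

end LipschitzOnWith

theorem Real.log_sqrt_mul_sub_log {a b : ℝ} (ha : 0 < a) (hb : 0 < b) :
    Real.log (Real.sqrt (a * b)) - Real.log a = (Real.log b - Real.log a) / 2 := by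
  rw [Real.log_sqrt (by positivity), Real.log_mul ha.ne' hb.ne']
  ring

/-- Inequality (3.4): averaged midpoint–trapezoid inequality for `M`-Lipschitzian
functions. -/
theorem stmt_10 (a b M : ℝ) (ha : 0 < a) (hab : a < b) (hM : 0 ≤ M)
    (f : ℝ → ℝ)
    (hf : ∀ x ∈ Set.Icc a b, ∀ y ∈ Set.Icc a b, |f x - f y| ≤ M * |x - y|) :
    |(1 / 2) * ((f a + f b) / 2 + f (Real.sqrt (a * b)))
      - (1 / (Real.log b - Real.log a)) * ∫ t in a..b, f t / t|
    ≤ M * (b - a) / 4 := by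
  have hb : 0 < b := ha.trans hab
  have hlip : LipschitzOnWith M.toNNReal f (Icc a b) := .of_dist_le' hf
  set g := Real.sqrt (a * b)
  have hag : a ≤ g := Real.le_sqrt_of_sq_le (by nlinarith)
  have hgb : g ≤ b := Real.sqrt_le_iff.2 ⟨hb.le, by nlinarith⟩
  set L := Real.log b - Real.log a
  have hL : 0 < L := sub_pos.2 (Real.log_lt_log ha hab)
  have hlog_ag : Real.log g - Real.log a = L / 2 := Real.log_sqrt_mul_sub_log ha hb
  have hlog_gb : Real.log b - Real.log g = L / 2 := by linarith
  have hlip_ag := hlip.mono (Icc_subset_Icc le_rfl hgb)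
  have hlip_gb := hlip.mono (Icc_subset_Icc hag le_rfl)
  have hleft := hlip_ag.abs_trapezoid_log_sub_integral_div_le ha hag
  have hright := hlip_gb.abs_trapezoid_log_sub_integral_div_le (ha.trans_le hag) hgb
  rw [hlog_ag, Real.coe_toNNReal M hM] at hleft
  rw [hlog_gb, Real.coe_toNNReal M hM] at hright
  rw [← integral_add_adjacent_intervals
    (hlip_ag.continuousOn.intervalIntegrable_div_id ha hag)
    (hlip_gb.continuousOn.intervalIntegrable_div_id (ha.trans_le hag) hgb)]
  set I₁ := ∫ t in a..g, f t / t
  set I₂ := ∫ t in g..b, f t / t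
  have hsplit : 1 / 2 * ((f a + f b) / 2 + f g) - 1 / L * (I₁ + I₂)
      = (((f a + f g) / 2 * (L / 2) - I₁) + ((f g + f b) / 2 * (L / 2) - I₂)) / L := by
    field_simp
    ring
  rw [hsplit, abs_div, abs_of_pos hL, div_le_iff₀ hL]
  calc _ ≤ M * (g - a) / 2 * (L / 2) + M * (b - g) / 2 * (L / 2) :=
        (abs_add_le _ _).trans (add_le_add hleft hright)
    _ = M * (b - a) / 4 * L := by ring
end

section
/- Let 0 < a < b, M ≥ 0, and let f : [a,b] → ℝ be M-Lipschitz. Then for all x ∈ [a,b] and λ ∈ [0,1], | (1-λ) f(x) + λ [f(a) ln(x/a) + f(b) ln(b/x)]/(ln b - ln a) - (1/(ln b - ln a)) ∫_a^b f(t)/t dt | ≤ [M/(ln b - ln a)] { [(1-λ)x - λa] ln(x/a) + [λb - (1-λ)x] ln(b/x) + (1-2λ)(a + b - 2x) }. -/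
/-!
Since `log (x / a) + log (b / x) = log b - log a`, the left-hand side times `log b - log a` is
`∫_a^x (c₁ - f t) / t dt + ∫_x^b (c₂ - f t) / t dt` with `c₁ = (1 - λ) f x + λ f a` and
`c₂ = λ f b + (1 - λ) f x`. On each piece the Lipschitz condition bounds `|c - f t|` by an affine
function of `t`, and the integral of such a function against `dt / t` is explicit.
-/

open intervalIntegral Set
open MeasureTheory (volume)

section WeightedIntegral

variable {p q : ℝ}

lemma intervalIntegrable_inv_of_pos (hp : 0 < p) (hq : 0 < q) :
    IntervalIntegrable (fun t : ℝ => t⁻¹) volume p q :=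
  intervalIntegrable_inv_iff.mpr (Or.inr (notMem_uIcc_of_lt hp hq))

lemma integral_const_add_mul_inv (hp : 0 < p) (hq : 0 < q) (c d : ℝ) :
    ∫ t in p..q, (c + d * t⁻¹) = c * (q - p) + d * Real.log (q / p) := by
  have hinv := intervalIntegrable_inv_of_pos hp hq
  rw [integral_add intervalIntegrable_const (hinv.const_mul d), integral_const,
    integral_const_mul, integral_inv_of_pos hp hq, smul_eq_mul, mul_comm c]

lemma integral_const_sub_div (hp : 0 < p) (hq : 0 < q) {f : ℝ → ℝ}
    (hf : IntervalIntegrable (fun t => f t / t) volume p q) (c : ℝ) :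
    ∫ t in p..q, (c - f t) / t = c * Real.log (q / p) - ∫ t in p..q, f t / t := by
  have hinv := intervalIntegrable_inv_of_pos hp hq
  simp_rw [sub_div, div_eq_mul_inv c]
  rw [integral_sub (hinv.const_mul c) hf, integral_const_mul,
    integral_inv_of_pos hp hq]

lemma abs_integral_div_le (hp : 0 < p) (hpq : p ≤ q) {g : ℝ → ℝ} {α β : ℝ}
    (hg : ∀ t ∈ Icc p q, |g t| ≤ α + β * t) :
    |∫ t in p..q, g t / t| ≤ β * (q - p) + α * Real.log (q / p) := by
  have hq : 0 < q := hp.trans_le hpq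
  have hinv := intervalIntegrable_inv_of_pos hp hq
  have hpointwise : ∀ t ∈ Ioc p q, ‖g t / t‖ ≤ β + α * t⁻¹ := by
    intro t ht
    have ht0 : 0 < t := hp.trans ht.1
    rw [Real.norm_eq_abs, abs_div, abs_of_pos ht0, div_le_iff₀ ht0, add_mul,
      inv_mul_cancel_right₀ ht0.ne', add_comm]
    exact hg t ⟨ht.1.le, ht.2⟩
  calc |∫ t in p..q, g t / t|
      ≤ ∫ t in p..q, (β + α * t⁻¹) :=
        norm_integral_le_of_norm_le hpq (Filter.Eventually.of_forall hpointwise)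
          (intervalIntegrable_const.add (hinv.const_mul α))
    _ = β * (q - p) + α * Real.log (q / p) := integral_const_add_mul_inv hp hq β α

lemma integral_const_sub_div_add_adjacent {f : ℝ → ℝ} {a x b : ℝ} (ha : 0 < a) (hax : a ≤ x)
    (hxb : x ≤ b) (hf : IntervalIntegrable (fun t => f t / t) volume a b) (c₁ c₂ : ℝ) :
    (∫ t in a..x, (c₁ - f t) / t) + ∫ t in x..b, (c₂ - f t) / t
      = c₁ * Real.log (x / a) + c₂ * Real.log (b / x) - ∫ t in a..b, f t / t := by
  have hax' : IntervalIntegrable (fun t => f t / t) volume a x :=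
    hf.mono_set (uIcc_subset_uIcc_left (mem_uIcc_of_le hax hxb))
  have hxb' : IntervalIntegrable (fun t => f t / t) volume x b :=
    hf.mono_set (uIcc_subset_uIcc_right (mem_uIcc_of_le hax hxb))
  have hx : 0 < x := ha.trans_le hax
  rw [integral_const_sub_div ha hx hax', integral_const_sub_div hx (hx.trans_le hxb) hxb',
    ← integral_add_adjacent_intervals hax' hxb']
  ring

end WeightedIntegral

lemma abs_convex_comb_sub_le {μ ν : ℝ} (hμ : 0 ≤ μ) (hν : 0 ≤ ν) (hμν : μ + ν = 1)
    (u v w : ℝ) : |μ * u + ν * v - w| ≤ μ * |u - w| + ν * |v - w| := by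
  have h : μ * u + ν * v - w = μ * (u - w) + ν * (v - w) := by
    linear_combination w * hμν
  rw [h]
  refine (abs_add_le _ _).trans_eq ?_
  rw [abs_mul, abs_mul, abs_of_nonneg hμ, abs_of_nonneg hν]

lemma abs_integral_convex_comb_endpoints_sub_div_le {s : Set ℝ} {f : ℝ → ℝ} {M μ ν p q : ℝ}
    (hp : 0 < p) (hpq : p ≤ q) (hs : Icc p q ⊆ s)
    (hf : ∀ x ∈ s, ∀ y ∈ s, |f x - f y| ≤ M * |x - y|)
    (hμ : 0 ≤ μ) (hν : 0 ≤ ν) (hμν : μ + ν = 1) :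
    |∫ t in p..q, (μ * f q + ν * f p - f t) / t|
      ≤ M * (ν - μ) * (q - p) + M * (μ * q - ν * p) * Real.log (q / p) := by
  refine abs_integral_div_le hp hpq fun t ht => ?_
  have hfq : |f q - f t| ≤ M * (q - t) := by
    simpa only [abs_of_nonneg (sub_nonneg.mpr ht.2)] using
      hf q (hs (right_mem_Icc.mpr hpq)) t (hs ht)
  have hfp : |f p - f t| ≤ M * (t - p) := by
    simpa only [abs_sub_comm p t, abs_of_nonneg (sub_nonneg.mpr ht.1)] using
      hf p (hs (left_mem_Icc.mpr hpq)) t (hs ht)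
  calc |μ * f q + ν * f p - f t|
      ≤ μ * |f q - f t| + ν * |f p - f t| := abs_convex_comb_sub_le hμ hν hμν _ _ _
    _ ≤ μ * (M * (q - t)) + ν * (M * (t - p)) :=
        add_le_add (mul_le_mul_of_nonneg_left hfq hμ) (mul_le_mul_of_nonneg_left hfp hν)
    _ = M * (μ * q - ν * p) + M * (ν - μ) * t := by ring

theorem stmt_11_general (a b M : ℝ) (ha : 0 < a) (hab : a < b)
    (f : ℝ → ℝ)
    (hf : ∀ x ∈ Set.Icc a b, ∀ y ∈ Set.Icc a b, |f x - f y| ≤ M * |x - y|)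
    (x : ℝ) (hx : x ∈ Set.Icc a b) (lam : ℝ) (hlam : lam ∈ Set.Icc (0 : ℝ) 1) :
    |(1 - lam) * f x
      + lam * ((f a * Real.log (x / a) + f b * Real.log (b / x)) / (Real.log b - Real.log a))
      - (1 / (Real.log b - Real.log a)) * ∫ t in a..b, f t / t|
    ≤ M / (Real.log b - Real.log a) *
        (((1 - lam) * x - lam * a) * Real.log (x / a)
          + (lam * b - (1 - lam) * x) * Real.log (b / x)
          + (1 - 2 * lam) * (a + b - 2 * x)) := by
  obtain ⟨hax, hxb⟩ := hx
  have hL : 0 < Real.log b - Real.log a := sub_pos.mpr (Real.log_lt_log ha hab)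
  have hlog_split : Real.log (x / a) + Real.log (b / x) = Real.log b - Real.log a := by
    rw [Real.log_div (ha.trans_le hax).ne' ha.ne', Real.log_div (ha.trans hab).ne'
      (ha.trans_le hax).ne']
    ring
  have hint : IntervalIntegrable (fun t => f t / t) volume a b :=
    ((LipschitzOnWith.of_dist_le' (by simpa only [Real.dist_eq] using hf)).continuousOn.div
      continuousOn_id fun t ht => (ha.trans_le ht.1).ne').intervalIntegrable_of_Icc hab.le
  have hsplit : (1 - lam) * f x
      + lam * ((f a * Real.log (x / a) + f b * Real.log (b / x)) / (Real.log b - Real.log a))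
      - (1 / (Real.log b - Real.log a)) * ∫ t in a..b, f t / t
      = ((∫ t in a..x, ((1 - lam) * f x + lam * f a - f t) / t)
          + ∫ t in x..b, (lam * f b + (1 - lam) * f x - f t) / t)
        / (Real.log b - Real.log a) := by
    rw [integral_const_sub_div_add_adjacent ha hax hxb hint]
    field_simp
    linear_combination -(1 - lam) * f x * hlog_split
  have hleft := abs_integral_convex_comb_endpoints_sub_div_le ha hax
    (Icc_subset_Icc_right hxb) hf (sub_nonneg.mpr hlam.2) hlam.1 (sub_add_cancel 1 lam)
  have hright := abs_integral_convex_comb_endpoints_sub_div_le (ha.trans_le hax) hxb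
    (Icc_subset_Icc_left hax) hf hlam.1 (sub_nonneg.mpr hlam.2) (add_sub_cancel lam 1)
  rw [hsplit, abs_div, abs_of_pos hL]
  exact (div_le_div_of_nonneg_right ((abs_add_le _ _).trans (add_le_add hleft hright))
    hL.le).trans_eq (by ring)

/-- α = 1 case of Theorem 2.1: general weighted inequality for `M`-Lipschitzian
functions. -/
theorem stmt_11 (a b M : ℝ) (ha : 0 < a) (hab : a < b) (hM : 0 ≤ M)
    (f : ℝ → ℝ)
    (hf : ∀ x ∈ Set.Icc a b, ∀ y ∈ Set.Icc a b, |f x - f y| ≤ M * |x - y|)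
    (x : ℝ) (hx : x ∈ Set.Icc a b) (lam : ℝ) (hlam : lam ∈ Set.Icc (0 : ℝ) 1) :
    |(1 - lam) * f x
      + lam * ((f a * Real.log (x / a) + f b * Real.log (b / x)) / (Real.log b - Real.log a))
      - (1 / (Real.log b - Real.log a)) * ∫ t in a..b, f t / t|
    ≤ M / (Real.log b - Real.log a) *
        (((1 - lam) * x - lam * a) * Real.log (x / a)
          + (lam * b - (1 - lam) * x) * Real.log (b / x)
          + (1 - 2 * lam) * (a + b - 2 * x)) :=
  stmt_11_general a b M ha hab f hf x hx lam hlam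
end

section
/- Let 0 < a < b, λ ∈ [0,1] and let n ≥ 1 be a real number. Then | (1-λ) G(a,b)^n + λ A(a^n, b^n) - L(a^n, b^n) | ≤ [n b^{n-1}/(ln b - ln a)] [ (λ(b-a)/2) ln(b/a) + 2(1-2λ)(A(a,b) - G(a,b)) ]. -/
/-!
Put `c = log b - log a`, so `b = a e^c`, and `F t = a^n e^{nct}`. Then `G(a^n, b^n) = F (1/2)`,
`L(a^n, b^n) = ∫₀¹ F` and `A(a^n, b^n) = (F 0 + F 1) / 2`. Since `F` is increasing, `L - G` and
`A - L` are at most `∫_{1/2}^1 w F'` for the weights `w = 1 - t` and `w = t - 1/2`. Writing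
`F = g^n` with `g t = a e^{ct} ≤ b` gives `F' ≤ n b^{n-1} g'`, and the same weighted integrals of
`g'` are at most `2 (A - G) / c` and `(b - a) / 2 - 2 (A - G) / c` for `a, b` themselves. As
`G ≤ L ≤ A`, the quantity inside the absolute value is `λ (A - L) - (1 - λ) (L - G)`, and the
right-hand side is the `λ`-combination of the two bounds.
-/

open Real Set intervalIntegral

lemma rpow_le_rpow_sub_one_mul {x y p : ℝ} (hx : 0 ≤ x) (hxy : x ≤ y) (hp : 1 ≤ p) :
    x ^ p ≤ y ^ (p - 1) * x := by
  calc x ^ p = x ^ (p - 1) * x := by rw [← rpow_add_one' hx (by linarith), sub_add_cancel]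
    _ ≤ y ^ (p - 1) * x := by gcongr

lemma exp_half_le_exp_sub_one_div {μ : ℝ} (hμ : 0 < μ) : exp (μ / 2) ≤ (exp μ - 1) / μ := by
  have h := self_le_sinh_iff.2 (half_pos hμ).le
  rw [sinh_eq, exp_neg] at h
  have hE : exp μ = exp (μ / 2) ^ 2 := by rw [exp_half, sq_sqrt (exp_pos _).le]
  rw [le_div_iff₀ hμ, hE]
  have := exp_pos (μ / 2)
  field_simp at h
  nlinarith

lemma exp_sub_one_div_le_add_div_two {μ : ℝ} (hμ : 0 < μ) : (exp μ - 1) / μ ≤ (1 + exp μ) / 2 := by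
  have hE := one_lt_exp_iff.2 hμ
  -- `x ≤ artanh x` at `x = tanh (μ / 2)`
  have h := sum_range_le_log_div (x := (exp μ - 1) / (exp μ + 1)) (by positivity)
    (by rw [div_lt_one (by positivity)]; linarith) 1
  have hx : (1 + (exp μ - 1) / (exp μ + 1)) / (1 - (exp μ - 1) / (exp μ + 1)) = exp μ := by
    field_simp; ring
  rw [hx, log_exp] at h
  simp only [Finset.range_one, Finset.sum_singleton, mul_zero, zero_add, pow_one,
    CharP.cast_eq_zero, div_one, one_div] at h
  rw [div_le_iff₀ hμ]
  rw [div_le_iff₀ (by positivity)] at h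
  nlinarith

lemma exp_half_sub_one_bounds (μ : ℝ) :
    μ / 2 ≤ exp (μ / 2) - 1 ∧ exp (μ / 2) - 1 ≤ μ / 2 * exp (μ / 2) := by
  refine ⟨by linarith [add_one_le_exp (μ / 2)], ?_⟩
  have h := mul_le_mul_of_nonneg_right (one_sub_le_exp_neg (μ / 2)) (exp_pos (μ / 2)).le
  rw [← exp_add, neg_add_cancel, exp_zero] at h
  linarith

lemma integral_affine_mul_exp (p q μ α β : ℝ) (hμ : μ ≠ 0) :
    ∫ t in α..β, (p + q * t) * (μ * exp (μ * t)) =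
      (p + q * β) * exp (μ * β) - (p + q * α) * exp (μ * α)
        - q * (exp (μ * β) - exp (μ * α)) / μ := by
  have hderiv (t : ℝ) : HasDerivAt (fun s ↦ (p + q * s) * exp (μ * s) - q * exp (μ * s) / μ)
      ((p + q * t) * (μ * exp (μ * t))) t := by
    have he : HasDerivAt (fun s ↦ exp (μ * s)) (exp (μ * t) * μ) t :=
      ((hasDerivAt_id t).const_mul μ).exp.congr_deriv (by simp)
    refine ((((hasDerivAt_id t).const_mul q).const_add p).mul he).sub
      (he.const_mul q |>.div_const μ) |>.congr_deriv ?_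
    field_simp
    simp only [id]
    ring
  rw [integral_eq_sub_of_hasDerivAt (fun t _ ↦ hderiv t)
    (Continuous.intervalIntegrable (by fun_prop) _ _)]
  ring

/- After integrating by parts, each inequality below reduces to `1/2 ≤ ∫₀^{1/2} e^{μt} dt` or to
`∫₀^{1/2} e^{μt} dt ≤ e^{μ/2} / 2`, i.e. to `exp_half_sub_one_bounds`. -/
lemma integral_one_sub_mul_exp_bounds {μ : ℝ} (hμ : 0 < μ) :
    (exp μ - 1) / μ - exp (μ / 2) ≤ ∫ t in (1 / 2 : ℝ)..1, (1 - t) * (μ * exp (μ * t)) ∧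
      ∫ t in (1 / 2 : ℝ)..1, (1 - t) * (μ * exp (μ * t)) ≤ (exp (μ / 2) - 1) ^ 2 / μ := by
  have h := integral_affine_mul_exp 1 (-1) μ (1 / 2) 1 hμ.ne'
  simp only [neg_one_mul, ← sub_eq_add_neg, mul_one, mul_one_div] at h
  rw [h]
  obtain ⟨-, hE⟩ := exp_half_sub_one_bounds μ
  have hsq : exp μ = exp (μ / 2) ^ 2 := by rw [exp_half, sq_sqrt (exp_pos _).le]
  constructor <;> rw [← sub_nonneg] <;> field_simp <;> rw [hsq] <;> nlinarith

lemma integral_sub_half_mul_exp_bounds {μ : ℝ} (hμ : 0 < μ) :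
    (1 + exp μ) / 2 - (exp μ - 1) / μ ≤ ∫ t in (1 / 2 : ℝ)..1, (t - 1 / 2) * (μ * exp (μ * t)) ∧
      ∫ t in (1 / 2 : ℝ)..1, (t - 1 / 2) * (μ * exp (μ * t))
        ≤ (exp μ - 1) / 2 - (exp (μ / 2) - 1) ^ 2 / μ := by
  have h := integral_affine_mul_exp (-(1 / 2)) 1 μ (1 / 2) 1 hμ.ne'
  simp only [one_mul, neg_add_eq_sub, mul_one, mul_one_div] at h
  rw [h]
  obtain ⟨hE, -⟩ := exp_half_sub_one_bounds μ
  have hsq : exp μ = exp (μ / 2) ^ 2 := by rw [exp_half, sq_sqrt (exp_pos _).le]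
  constructor <;> rw [← sub_nonneg] <;> field_simp <;> rw [hsq] <;> nlinarith

lemma integral_mul_rpow_exp_le {a c n α β : ℝ} {w : ℝ → ℝ} (ha : 0 < a) (hc : 0 ≤ c)
    (hn : 1 ≤ n) (hαβ : α ≤ β) (hβ : β ≤ 1) (hw : Continuous w)
    (hw₀ : ∀ t ∈ Icc α β, 0 ≤ w t) :
    a ^ n * ∫ t in α..β, w t * (n * c * exp (n * c * t))
      ≤ n * (a * exp c) ^ (n - 1) * (a * ∫ t in α..β, w t * (c * exp (c * t))) := by
  rw [← integral_const_mul, ← integral_const_mul, ← integral_const_mul]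
  refine integral_mono_on hαβ (Continuous.intervalIntegrable (by fun_prop) _ _)
    (Continuous.intervalIntegrable (by fun_prop) _ _) fun t ht ↦ ?_
  have hx : a * exp (c * t) ≤ a * exp c := by
    gcongr
    nlinarith [ht.2]
  have hpow : a ^ n * exp (n * c * t) = (a * exp (c * t)) ^ n := by
    rw [mul_rpow ha.le (exp_pos _).le, ← exp_mul]
    ring_nf
  have key := rpow_le_rpow_sub_one_mul (by positivity) hx hn
  calc a ^ n * (w t * (n * c * exp (n * c * t)))
      = w t * (n * c) * (a * exp (c * t)) ^ n := by rw [← hpow]; ring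
    _ ≤ w t * (n * c) * ((a * exp c) ^ (n - 1) * (a * exp (c * t))) := by
      gcongr
      exact mul_nonneg (hw₀ t ht) (mul_nonneg (by linarith) hc)
    _ = _ := by ring

lemma rpow_logMean_sub_geomMean_le {a c n : ℝ} (ha : 0 < a) (hc : 0 < c) (hn : 1 ≤ n) :
    a ^ n * ((exp (n * c) - 1) / (n * c) - exp (n * c / 2))
      ≤ n * (a * exp c) ^ (n - 1) * (a * ((exp (c / 2) - 1) ^ 2 / c)) := by
  have hnc : 0 < n * c := by positivity
  calc a ^ n * ((exp (n * c) - 1) / (n * c) - exp (n * c / 2))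
      ≤ a ^ n * ∫ t in (1 / 2 : ℝ)..1, (1 - t) * (n * c * exp (n * c * t)) := by
        gcongr; exact (integral_one_sub_mul_exp_bounds hnc).1
    _ ≤ n * (a * exp c) ^ (n - 1) * (a * ∫ t in (1 / 2 : ℝ)..1, (1 - t) * (c * exp (c * t))) :=
        integral_mul_rpow_exp_le ha hc.le hn (by norm_num) le_rfl (by fun_prop)
          fun t ht ↦ by linarith [ht.2]
    _ ≤ n * (a * exp c) ^ (n - 1) * (a * ((exp (c / 2) - 1) ^ 2 / c)) := by
        gcongr; exact (integral_one_sub_mul_exp_bounds hc).2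

lemma rpow_arithMean_sub_logMean_le {a c n : ℝ} (ha : 0 < a) (hc : 0 < c) (hn : 1 ≤ n) :
    a ^ n * ((1 + exp (n * c)) / 2 - (exp (n * c) - 1) / (n * c))
      ≤ n * (a * exp c) ^ (n - 1) * (a * ((exp c - 1) / 2 - (exp (c / 2) - 1) ^ 2 / c)) := by
  have hnc : 0 < n * c := by positivity
  calc a ^ n * ((1 + exp (n * c)) / 2 - (exp (n * c) - 1) / (n * c))
      ≤ a ^ n * ∫ t in (1 / 2 : ℝ)..1, (t - 1 / 2) * (n * c * exp (n * c * t)) := by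
        gcongr; exact (integral_sub_half_mul_exp_bounds hnc).1
    _ ≤ n * (a * exp c) ^ (n - 1) * (a * ∫ t in (1 / 2 : ℝ)..1, (t - 1 / 2) * (c * exp (c * t))) :=
        integral_mul_rpow_exp_le ha hc.le hn (by norm_num) le_rfl (by fun_prop)
          fun t ht ↦ by linarith [ht.1]
    _ ≤ n * (a * exp c) ^ (n - 1) * (a * ((exp c - 1) / 2 - (exp (c / 2) - 1) ^ 2 / c)) := by
        gcongr; exact (integral_sub_half_mul_exp_bounds hc).2

lemma abs_convex_sub_le {l x y x' y' : ℝ} (hl : l ∈ Icc (0 : ℝ) 1) (hx₀ : 0 ≤ x) (hx : x ≤ x')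
    (hy₀ : 0 ≤ y) (hy : y ≤ y') : |l * x - (1 - l) * y| ≤ l * x' + (1 - l) * y' := by
  obtain ⟨hl₀, hl₁⟩ := hl
  have h₁ := mul_le_mul_of_nonneg_left hx hl₀
  have h₂ := mul_le_mul_of_nonneg_left hy (sub_nonneg.2 hl₁)
  rw [abs_le]
  constructor <;> linarith [mul_nonneg hl₀ hx₀, mul_nonneg (sub_nonneg.2 hl₁) hy₀]

/-- Proposition 3.1: an inequality between arithmetic, geometric and logarithmic
means, where `A (x, y) = (x + y) / 2`, `G (x, y) = √(x y)` and
`L (x, y) = (y - x) / (log y - log x)`. -/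
theorem stmt_18 (a b : ℝ) (ha : 0 < a) (hab : a < b)
    (lam : ℝ) (hlam : lam ∈ Set.Icc (0 : ℝ) 1) (n : ℝ) (hn : 1 ≤ n) :
    |(1 - lam) * (Real.sqrt (a * b)) ^ n + lam * ((a ^ n + b ^ n) / 2)
      - (b ^ n - a ^ n) / (Real.log (b ^ n) - Real.log (a ^ n))|
    ≤ n * b ^ (n - 1) / (Real.log b - Real.log a) *
        (lam * (b - a) / 2 * Real.log (b / a)
          + 2 * (1 - 2 * lam) * ((a + b) / 2 - Real.sqrt (a * b))) := by
  obtain ⟨c, hc, rfl⟩ : ∃ c, 0 < c ∧ b = a * exp c :=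
    ⟨log b - log a, sub_pos.2 (log_lt_log ha hab),
      by rw [exp_sub, exp_log ha, exp_log (ha.trans hab)]; field_simp⟩
  have hlog : log (a * exp c) = log a + c := by rw [log_mul ha.ne' (exp_pos c).ne', log_exp]
  have hsq : exp c = exp (c / 2) ^ 2 := by rw [exp_half, sq_sqrt (exp_pos _).le]
  have hsqrt : √(a * (a * exp c)) = a * exp (c / 2) := by
    rw [← mul_assoc, sqrt_mul (mul_self_nonneg a), sqrt_mul_self ha.le, exp_half]
  have hpow (x : ℝ) : (a * exp x) ^ n = a ^ n * exp (n * x) := by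
    rw [mul_rpow ha.le (exp_pos x).le, ← exp_mul, mul_comm x]
  have hnc : 0 < n * c := by positivity
  rw [log_rpow (by positivity), log_rpow ha, hlog, mul_div_cancel_left₀ _ ha.ne', log_exp, hsqrt,
    hpow, hpow]
  calc _ = |lam * (a ^ n * ((1 + exp (n * c)) / 2 - (exp (n * c) - 1) / (n * c)))
        - (1 - lam) * (a ^ n * ((exp (n * c) - 1) / (n * c) - exp (n * c / 2)))| := by
        congr 1; field_simp [hc.ne']; ring
    _ ≤ lam * (n * (a * exp c) ^ (n - 1) * (a * ((exp c - 1) / 2 - (exp (c / 2) - 1) ^ 2 / c)))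
        + (1 - lam) * (n * (a * exp c) ^ (n - 1) * (a * ((exp (c / 2) - 1) ^ 2 / c))) := by
        refine abs_convex_sub_le hlam ?_ (rpow_arithMean_sub_logMean_le ha hc hn) ?_
          (rpow_logMean_sub_geomMean_le ha hc hn)
        · exact mul_nonneg (rpow_pos_of_pos ha n).le
            (sub_nonneg.2 (exp_sub_one_div_le_add_div_two hnc))
        · exact mul_nonneg (rpow_pos_of_pos ha n).le
            (sub_nonneg.2 (exp_half_le_exp_sub_one_div hnc))
    _ = _ := by field_simp [hc.ne']; rw [hsq]; ring
end

section
/- Let 0 < a < b and λ ∈ [0,1]. Then | (1-λ) G(a,b)^{-1} + λ H(a,b)^{-1} - L(a,b) G(a,b)^{-2} | ≤ [1/(a² (ln b - ln a))] [ (λ(b-a)/2) ln(b/a) + 2(1-2λ)(A(a,b) - G(a,b)) ]. -/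
/-! Both sides are homogeneous of degree `-1` in `(a, b)`, so write `b = a s²` with `s > 1`.
After clearing the common denominator `a s² log (b / a)`, the quantity inside the absolute value
and the bound are both affine in `λ`, so it suffices to treat `λ = 0` and `λ = 1`. These two
cases follow from `G ≤ L ≤ A` for the pair `(1, s²)` together with `1 - 1/s ≤ log s ≤ s - 1`. -/

open Real Set

theorem two_mul_mul_log_le_sq_sub_one {s : ℝ} (hs : 1 ≤ s) : 2 * s * log s ≤ s ^ 2 - 1 := by
  have hs₀ : 0 < s := by linarith
  have h := self_le_sinh_iff.2 (log_nonneg hs)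
  rw [sinh_log hs₀] at h
  calc 2 * s * log s ≤ 2 * s * ((s - s⁻¹) / 2) := by gcongr
    _ = s ^ 2 - 1 := by field_simp

theorem two_mul_sub_one_le_add_one_mul_log {y : ℝ} (hy : 1 ≤ y) :
    2 * (y - 1) ≤ (y + 1) * log y := by
  set f : ℝ → ℝ := fun x ↦ (x + 1) * log x - 2 * (x - 1)
  have hf : ∀ x, 0 < x → HasDerivAt f (log x + x⁻¹ - 1) x := fun x hx ↦ by
    refine ((((hasDerivAt_id x).add_const 1).mul (hasDerivAt_log hx.ne')).sub
      (((hasDerivAt_id x).sub_const 1).const_mul 2)).congr_deriv ?_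
    simp only [id]
    field_simp
    ring
  have hmono : MonotoneOn f (Ici 1) := by
    refine monotoneOn_of_hasDerivWithinAt_nonneg (convex_Ici 1)
      (fun x hx ↦ (hf x (zero_lt_one.trans_le hx)).continuousAt.continuousWithinAt)
      (fun x hx ↦ (hf x ?_).hasDerivWithinAt) (fun x hx ↦ ?_) <;>
      rw [interior_Ici, mem_Ioi] at hx
    · linarith
    · linarith [one_sub_inv_le_log_of_pos (show 0 < x by linarith)]
  simpa [f] using hmono self_mem_Ici hy hy

theorem abs_convex_comb_le {x y X Y t : ℝ} (hx : |x| ≤ X) (hy : |y| ≤ Y)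
    (ht : t ∈ Icc (0 : ℝ) 1) :
    |(1 - t) * x + t * y| ≤ (1 - t) * X + t * Y := by
  obtain ⟨ht₀, ht₁⟩ := ht
  calc |(1 - t) * x + t * y| ≤ |(1 - t) * x| + |t * y| := abs_add_le _ _
    _ = (1 - t) * |x| + t * |y| := by
      rw [abs_mul, abs_mul, abs_of_nonneg (sub_nonneg.2 ht₁), abs_of_nonneg ht₀]
    _ ≤ (1 - t) * X + t * Y := by gcongr

theorem abs_mul_two_mul_log_sub_le {s : ℝ} (hs : 1 ≤ s) :
    |s * (2 * log s) - (s ^ 2 - 1)| ≤ s ^ 2 * (s - 1) ^ 2 := by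
  have hs₀ : 0 < s := by linarith
  have hGL := two_mul_mul_log_le_sq_sub_one hs
  have hlog : 2 * (s - 1) ≤ 2 * s * log s := by
    calc 2 * (s - 1) = 2 * s * (1 - s⁻¹) := by field_simp
      _ ≤ 2 * s * log s := by gcongr; exact one_sub_inv_le_log_of_pos hs₀
  rw [abs_of_nonpos (by linarith)]
  calc -(s * (2 * log s) - (s ^ 2 - 1)) ≤ (s - 1) ^ 2 := by linarith
    _ ≤ s ^ 2 * (s - 1) ^ 2 := le_mul_of_one_le_left (sq_nonneg _) (one_le_pow₀ hs)

theorem abs_one_add_sq_mul_log_sub_le {s : ℝ} (hs : 1 ≤ s) :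
    |(1 + s ^ 2) * log s - (s ^ 2 - 1)| ≤ s ^ 2 * ((s ^ 2 - 1) * log s - (s - 1) ^ 2) := by
  have hLA := two_mul_sub_one_le_add_one_mul_log (one_le_pow₀ hs : 1 ≤ s ^ 2)
  rw [log_pow, Nat.cast_ofNat] at hLA
  have hlog := log_le_sub_one_of_pos (show 0 < s by linarith)
  rw [abs_of_nonneg (by linarith)]
  calc (1 + s ^ 2) * log s - (s ^ 2 - 1) ≤ (s ^ 2 - 1) * log s - (s - 1) ^ 2 := by linarith
    _ ≤ s ^ 2 * ((s ^ 2 - 1) * log s - (s - 1) ^ 2) :=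
      le_mul_of_one_le_left (by linarith) (one_le_pow₀ hs)

theorem abs_lerp_mul_log_sub_le {s t : ℝ} (hs : 1 ≤ s) (ht : t ∈ Icc (0 : ℝ) 1) :
    |(1 - t) * (s * (2 * log s)) + t * ((1 + s ^ 2) * log s) - (s ^ 2 - 1)|
      ≤ s ^ 2 * (t * (s ^ 2 - 1) * log s + (1 - 2 * t) * (s - 1) ^ 2) := by
  convert abs_convex_comb_le (abs_mul_two_mul_log_sub_le hs)
    (abs_one_add_sq_mul_log_sub_le hs) ht using 2 <;> ring

/-- Proposition 3.3: an inequality between the geometric mean `G (x, y) = √(x y)`,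
the harmonic mean `H (x, y) = 2 x y / (x + y)`, the arithmetic mean
`A (x, y) = (x + y) / 2` and the logarithmic mean
`L (x, y) = (y - x) / (log y - log x)`. -/
theorem stmt_19 (a b : ℝ) (ha : 0 < a) (hab : a < b)
    (lam : ℝ) (hlam : lam ∈ Set.Icc (0 : ℝ) 1) :
    |(1 - lam) * (Real.sqrt (a * b))⁻¹ + lam * (2 * a * b / (a + b))⁻¹
      - (b - a) / (Real.log b - Real.log a) * ((Real.sqrt (a * b)) ^ 2)⁻¹|
    ≤ 1 / (a ^ 2 * (Real.log b - Real.log a)) *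
        (lam * (b - a) / 2 * Real.log (b / a)
          + 2 * (1 - 2 * lam) * ((a + b) / 2 - Real.sqrt (a * b))) := by
  obtain ⟨s, hs, rfl⟩ : ∃ s, 1 < s ∧ b = a * s ^ 2 :=
    ⟨√(b / a), (lt_sqrt zero_le_one).2 (by rw [one_pow, one_lt_div ha]; exact hab),
      by rw [sq_sqrt (div_pos (ha.trans hab) ha).le]; field_simp⟩
  have hs₀ : 0 < s := by linarith
  have hlog_pos : 0 < log s := log_pos hs
  have hsqrt : √(a * (a * s ^ 2)) = a * s := by
    rw [show a * (a * s ^ 2) = (a * s) ^ 2 by ring, sqrt_sq (by positivity)]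
  have hlog : log (a * s ^ 2) - log a = 2 * log s := by
    rw [log_mul ha.ne' (by positivity), log_pow]; push_cast; ring
  have hlog' : log (a * s ^ 2 / a) = 2 * log s := by
    rw [mul_div_cancel_left₀ _ ha.ne', log_pow]; push_cast; ring
  have hD : 0 < a * s ^ 2 * (2 * log s) := by positivity
  rw [hsqrt, hlog, hlog']
  calc _ = |(1 - lam) * (s * (2 * log s)) + lam * ((1 + s ^ 2) * log s) - (s ^ 2 - 1)|
        / (a * s ^ 2 * (2 * log s)) := by
        rw [← abs_of_pos hD, ← abs_div]; congr 1; field_simp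
    _ ≤ s ^ 2 * (lam * (s ^ 2 - 1) * log s + (1 - 2 * lam) * (s - 1) ^ 2)
        / (a * s ^ 2 * (2 * log s)) := by gcongr; exact abs_lerp_mul_log_sub_le hs.le hlam
    _ = _ := by field_simp; ring
end
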